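/- arXiv:2309.02013 — 2 statements merged into one kernel-verified Lean document; each statement's English description precedes it below -/
import Mathlib

section
/- Let $\mu$ be a Borel probability measure on $\mathbb{R}^d$, and for $x\in\mathbb{R}^d$ let $F_{\mu,x}(t)=\mu(\{z : \langle z,x\rangle\le t\})$. Then for every $x,y\in\mathbb{R}^d$, every $t\in\mathbb{R}$, every $\xi>0$, and any other Borel probability measure $\nu$ on $\mathbb{R}^d$ with marginal distribution functions $F_{\nu,x}$: $|F_{\mu,x}(t)-F_{\nu,x}(t)| \le \sup_{t'\in[t-\xi,t+\xi]}|F_{\mu,y}(t')-F_{\nu,y}(t')| + \mu(\{z : |\langle z,x\rangle-\langle z,y\rangle|\ge\xi\}) + (F_{\nu,x}(t+\xi)-F_{\nu,x}(t-\xi))$, provided $F_{\nu,y}=F_{\nu,x}$ (i.e. the marginals of $\nu$ in directions $x$ and $y$ coincide, as for the standard gaussian with $x,y\in S^{d-1}$). -/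
/-!
Where `X` and `Y` differ by less than `ξ`, `X ≤ t` forces `Y ≤ t + ξ` and `Y ≤ t - ξ` forces `X ≤ t`.
So, up to the mass `μ(|X - Y| ≥ ξ)`, the distribution function of `X` under `μ` at `t` is squeezed
between those of `Y` at `t ∓ ξ`. Under `ν` the distribution functions of `X` and `Y` coincide, so
comparing the two measures along `Y` at `t ∓ ξ` instead of along `X` at `t` costs at most the
increment of that common distribution function over `[t - ξ, t + ξ]`.
-/

open MeasureTheory

lemma setOf_le_subset_union {α : Type*} (X Y : α → ℝ) (t ξ : ℝ) :
    {z | X z ≤ t} ⊆ {z | Y z ≤ t + ξ} ∪ {z | ξ ≤ |X z - Y z|} := by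
  intro z (hz : X z ≤ t)
  rcases le_or_gt ξ |X z - Y z| with hfar | hnear
  · exact Or.inr hfar
  · have := (abs_lt.mp hnear).1
    exact Or.inl (show Y z ≤ t + ξ by linarith)

section

variable {α : Type*} [MeasurableSpace α]

lemma measureReal_setOf_le_le_add (μ : Measure α) [IsFiniteMeasure μ] (X Y : α → ℝ) (t ξ : ℝ) :
    μ.real {z | X z ≤ t} ≤ μ.real {z | Y z ≤ t + ξ} + μ.real {z | ξ ≤ |X z - Y z|} :=
  (measureReal_mono (setOf_le_subset_union X Y t ξ)).trans (measureReal_union_le _ _)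

lemma measureReal_setOf_le_mono (μ : Measure α) [IsFiniteMeasure μ] (X : α → ℝ) :
    Monotone fun t => μ.real {z | X z ≤ t} :=
  fun _ _ hst => measureReal_mono fun _ hz => le_trans hz hst

lemma abs_measureReal_sub_measureReal_le_one (μ ν : Measure α) [IsProbabilityMeasure μ]
    [IsProbabilityMeasure ν] (s s' : Set α) : |μ.real s - ν.real s'| ≤ 1 :=
  abs_sub_le_of_nonneg_of_le measureReal_nonneg measureReal_le_one
    measureReal_nonneg measureReal_le_one

theorem abs_measureReal_setOf_le_sub_le (μ ν : Measure α) [IsProbabilityMeasure μ]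
    [IsProbabilityMeasure ν] (X Y : α → ℝ) {t ξ : ℝ} (hξ : 0 ≤ ξ)
    (hmarg : ∀ s, ν.real {z | Y z ≤ s} = ν.real {z | X z ≤ s}) :
    |μ.real {z | X z ≤ t} - ν.real {z | X z ≤ t}| ≤
      sSup ((fun t' => |μ.real {z | Y z ≤ t'} - ν.real {z | Y z ≤ t'}|) ''
        Set.Icc (t - ξ) (t + ξ)) +
      μ.real {z | ξ ≤ |X z - Y z|} +
      (ν.real {z | X z ≤ t + ξ} - ν.real {z | X z ≤ t - ξ}) := by
  set g := fun t' => |μ.real {z | Y z ≤ t'} - ν.real {z | Y z ≤ t'}|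
  set S := sSup (g '' Set.Icc (t - ξ) (t + ξ))
  have hbdd : BddAbove (g '' Set.Icc (t - ξ) (t + ξ)) :=
    ⟨1, by rintro _ ⟨t', -, rfl⟩; exact abs_measureReal_sub_measureReal_le_one μ ν _ _⟩
  have hS : ∀ t' ∈ Set.Icc (t - ξ) (t + ξ),
      |μ.real {z | Y z ≤ t'} - ν.real {z | X z ≤ t'}| ≤ S :=
    fun t' ht' => hmarg t' ▸ le_csSup hbdd (Set.mem_image_of_mem g ht')
  obtain ⟨-, hS_right⟩ := abs_le.mp (hS (t + ξ) ⟨by linarith, le_rfl⟩)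
  obtain ⟨hS_left, -⟩ := abs_le.mp (hS (t - ξ) ⟨le_rfl, by linarith⟩)
  have hupper := measureReal_setOf_le_le_add μ X Y t ξ
  have hlower := measureReal_setOf_le_le_add μ Y X (t - ξ) ξ
  simp only [sub_add_cancel, abs_sub_comm (Y _)] at hlower
  have hν_left : ν.real {z | X z ≤ t - ξ} ≤ ν.real {z | X z ≤ t} :=
    measureReal_setOf_le_mono ν X (by linarith)
  have hν_right : ν.real {z | X z ≤ t} ≤ ν.real {z | X z ≤ t + ξ} :=
    measureReal_setOf_le_mono ν X (by linarith)
  rw [abs_sub_le_iff]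
  constructor <;> linarith

end

/-- Lemma 2.2: continuity of `x ↦ |F_{μ,x}(t) - F_{ν,x}(t)|`. -/
theorem stmt1 (d : ℕ) (μ ν : Measure (EuclideanSpace ℝ (Fin d)))
    [IsProbabilityMeasure μ] [IsProbabilityMeasure ν]
    (x y : EuclideanSpace ℝ (Fin d)) (t ξ : ℝ) (hξ : 0 < ξ)
    -- the marginals of `ν` in directions `x` and `y` coincide:
    (hmarg : ∀ s : ℝ, ν {z | (inner ℝ z y : ℝ) ≤ s} = ν {z | (inner ℝ z x : ℝ) ≤ s}) :
    |(μ {z | (inner ℝ z x : ℝ) ≤ t}).toReal - (ν {z | (inner ℝ z x : ℝ) ≤ t}).toReal| ≤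
      sSup ((fun t' : ℝ => |(μ {z | (inner ℝ z y : ℝ) ≤ t'}).toReal -
          (ν {z | (inner ℝ z y : ℝ) ≤ t'}).toReal|) '' Set.Icc (t - ξ) (t + ξ)) +
      (μ {z | ξ ≤ |(inner ℝ z x : ℝ) - (inner ℝ z y : ℝ)|}).toReal +
      ((ν {z | (inner ℝ z x : ℝ) ≤ t + ξ}).toReal -
        (ν {z | (inner ℝ z x : ℝ) ≤ t - ξ}).toReal) :=
  abs_measureReal_setOf_le_sub_le μ ν (inner ℝ · x) (inner ℝ · y) hξ.le
    fun s => congrArg ENNReal.toReal (hmarg s)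
end

section
/- There exist absolute constants $c,C>0$ such that for every $t\in\mathbb{R}$ and every $\xi$ with $0\le \xi\le c/\sqrt{\log(1/\sigma^2(t))}$, one has $|F_g(t\pm\xi)-F_g(t)|\le C\,\xi\,\sigma^2(t)\sqrt{\log(1/\sigma^2(t))}$, where $F_g$ is the standard normal distribution function and $\sigma^2(t)=F_g(t)(1-F_g(t))$. -/
/-!
Increments of `Phi` are integrals of the standard normal density `φ`, and
`φ s ≤ φ t · exp (|t| |s - t|)`. A Chernoff bound gives `sigma2 t ≤ exp (-t ^ 2 / 2)`, i.e.
`|t| ≤ 2 √(log (1 / sigma2 t))`, so for admissible `ξ` the density is at most `e · φ t` on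
`[t - ξ, t + ξ]`. It remains to show `φ t ≲ sigma2 t · √(log (1 / sigma2 t))`: by symmetry
`t ≥ 0`, where `sigma2 t` is comparable to the tail `1 - Phi t`, and the Mills-ratio bound
`φ t ≤ e² t (1 - Phi t)` for `t ≥ 1` combined with `t ≤ 2 √(log (1 / sigma2 t))` concludes.
-/

open MeasureTheory

/-- The standard normal distribution function. -/
noncomputable def Phi (t : ℝ) : ℝ := (ProbabilityTheory.gaussianReal 0 1 (Set.Iic t)).toReal

/-- `σ²(t) = F_g(t)(1 - F_g(t))`. -/
noncomputable def sigma2 (t : ℝ) : ℝ := Phi t * (1 - Phi t)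

open ProbabilityTheory Real Set
open scoped Interval

local notation "φ" => gaussianPDFReal 0 1

lemma gaussianPDFReal_zero_one (x : ℝ) : φ x = (√(2 * π))⁻¹ * exp (-x ^ 2 / 2) := by
  simp [gaussianPDFReal]

lemma gaussianPDFReal_zero_one_neg (x : ℝ) : φ (-x) = φ x := by
  simp only [gaussianPDFReal_zero_one, neg_sq]

lemma gaussianPDFReal_le_mul_exp (s t : ℝ) : φ s ≤ φ t * exp (|t| * |s - t|) := by
  have hexp : (t ^ 2 - s ^ 2) / 2 ≤ |t| * |s - t| := by
    have h := neg_abs_le (t * (s - t))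
    rw [abs_mul] at h
    nlinarith [sq_nonneg (s - t)]
  calc φ s = φ t * exp ((t ^ 2 - s ^ 2) / 2) := by
        simp only [gaussianPDFReal_zero_one, mul_assoc, ← exp_add]
        ring_nf
    _ ≤ φ t * exp (|t| * |s - t|) := by
        gcongr
        exact gaussianPDFReal_nonneg 0 1 t

lemma Phi_eq_integral (t : ℝ) : Phi t = ∫ x in Iic t, φ x := by
  rw [Phi, gaussianReal_apply_eq_integral 0 one_ne_zero, ENNReal.toReal_ofReal]
  exact setIntegral_nonneg measurableSet_Iic fun x _ ↦ gaussianPDFReal_nonneg 0 1 x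

lemma Phi_sub_Phi (a b : ℝ) : Phi b - Phi a = ∫ x in a..b, φ x := by
  rw [Phi_eq_integral, Phi_eq_integral]
  exact intervalIntegral.integral_Iic_sub_Iic (integrable_gaussianPDFReal 0 1).integrableOn
    (integrable_gaussianPDFReal 0 1).integrableOn

lemma abs_Phi_sub_Phi_le {a b M : ℝ} (h : ∀ x ∈ Ι a b, φ x ≤ M) :
    |Phi b - Phi a| ≤ M * |b - a| := by
  rw [Phi_sub_Phi, ← Real.norm_eq_abs]
  refine intervalIntegral.norm_integral_le_of_norm_le_const fun x hx ↦ ?_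
  rw [Real.norm_of_nonneg (gaussianPDFReal_nonneg 0 1 x)]
  exact h x hx

lemma mul_sub_le_Phi_sub_Phi {a b m : ℝ} (hab : a ≤ b) (h : ∀ x ∈ Icc a b, m ≤ φ x) :
    m * (b - a) ≤ Phi b - Phi a := by
  rw [Phi_sub_Phi, mul_comm, ← smul_eq_mul, ← intervalIntegral.integral_const]
  exact intervalIntegral.integral_mono_on hab intervalIntegrable_const
    (integrable_gaussianPDFReal 0 1).intervalIntegrable h

lemma Phi_strictMono : StrictMono Phi := fun a b hab ↦ by
  rw [← sub_pos, Phi_sub_Phi]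
  exact intervalIntegral.intervalIntegral_pos_of_pos
    (integrable_gaussianPDFReal 0 1).intervalIntegrable
    (gaussianPDFReal_pos 0 1 · one_ne_zero) hab

lemma Phi_le_one (t : ℝ) : Phi t ≤ 1 :=
  ENNReal.toReal_le_of_le_ofReal zero_le_one (by simpa using prob_le_one)

lemma Phi_pos (t : ℝ) : 0 < Phi t :=
  ENNReal.toReal_nonneg.trans_lt (Phi_strictMono (sub_one_lt t))

lemma Phi_neg (t : ℝ) : Phi (-t) = 1 - Phi t := by
  have := nullSingletonClass_gaussianReal (μ := 0) one_ne_zero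
  have hmap : (gaussianReal 0 1).map (fun x ↦ -x) = gaussianReal 0 1 := by
    simpa using gaussianReal_map_neg (μ := 0) (v := 1)
  simp only [Phi, ← measureReal_def]
  nth_rw 1 [← hmap]
  rw [map_measureReal_apply measurable_neg measurableSet_Iic,
    show Neg.neg ⁻¹' Iic (-t) = Ici t by ext; simp,
    ← measureReal_congr Ioi_ae_eq_Ici, ← compl_Iic, probReal_compl_eq_one_sub measurableSet_Iic]

/-- Chernoff bound with the Gaussian moment generating function `exp (s ^ 2 / 2)` at `s = t`. -/
lemma Phi_le_exp {t : ℝ} (ht : t ≤ 0) : Phi t ≤ exp (-t ^ 2 / 2) := by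
  have h := measure_le_le_exp_mul_mgf (X := id) (μ := gaussianReal 0 1) t ht
    (integrable_exp_mul_gaussianReal t)
  rw [mgf_id_gaussianReal, ← exp_add] at h
  convert h using 2
  · rfl
  · push_cast; ring

lemma sigma2_neg (t : ℝ) : sigma2 (-t) = sigma2 t := by
  rw [sigma2, sigma2, Phi_neg]; ring

lemma sigma2_pos (t : ℝ) : 0 < sigma2 t := by
  have h := Phi_strictMono (lt_add_one t)
  exact mul_pos (Phi_pos t) (by linarith [Phi_le_one (t + 1)])

lemma sigma2_le_exp (t : ℝ) : sigma2 t ≤ exp (-t ^ 2 / 2) := by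
  wlog ht : t ≤ 0 generalizing t
  · simpa [sigma2_neg] using this (-t) (by linarith)
  calc sigma2 t ≤ Phi t := mul_le_of_le_one_right (Phi_pos t).le (by linarith [Phi_pos t])
    _ ≤ exp (-t ^ 2 / 2) := Phi_le_exp ht

lemma one_le_log_inv_sigma2 (t : ℝ) : 1 ≤ log (1 / sigma2 t) := by
  have hσ := sigma2_pos t
  have hquarter : sigma2 t ≤ 1 / 4 := by
    rw [sigma2]; nlinarith [sq_nonneg (Phi t - 1 / 2)]
  rw [le_log_iff_exp_le (by positivity), le_div_iff₀ hσ]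
  nlinarith [exp_one_lt_d9]

lemma one_le_sqrt_log_inv_sigma2 (t : ℝ) : 1 ≤ √(log (1 / sigma2 t)) :=
  one_le_sqrt.2 (one_le_log_inv_sigma2 t)

lemma abs_le_two_mul_sqrt_log_inv_sigma2 (t : ℝ) : |t| ≤ 2 * √(log (1 / sigma2 t)) := by
  have hσ := sigma2_pos t
  have hsq : t ^ 2 ≤ 2 * log (1 / sigma2 t) := by
    have := log_le_log hσ (sigma2_le_exp t)
    rw [log_exp] at this
    rw [one_div, log_inv]
    linarith
  calc |t| ≤ √(2 ^ 2 * log (1 / sigma2 t)) :=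
        abs_le_sqrt (by nlinarith [one_le_log_inv_sigma2 t])
    _ = 2 * √(log (1 / sigma2 t)) := by rw [sqrt_mul (by positivity), sqrt_sq zero_le_two]

lemma one_sub_Phi_le_two_mul_sigma2 {t : ℝ} (ht : 0 ≤ t) : 1 - Phi t ≤ 2 * sigma2 t := by
  have hhalf : 1 / 2 ≤ Phi t := by
    have hmono := Phi_strictMono.monotone ht
    have hzero := Phi_neg 0
    rw [neg_zero] at hzero
    linarith
  rw [sigma2]; nlinarith [Phi_le_one t]

/-- A Mills-ratio bound: on `[t, t + t⁻¹]` the density stays above `e⁻² φ t`. -/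
lemma gaussianPDFReal_le_exp_two_mul_one_sub_Phi {t : ℝ} (ht : 1 ≤ t) :
    φ t ≤ exp 2 * t * (1 - Phi t) := by
  have htpos : 0 < t := by linarith
  have hbound : ∀ x ∈ Icc t (t + t⁻¹), φ t * exp (-2) ≤ φ x := by
    intro x ⟨hx1, hx2⟩
    have hprod : |x| * |t - x| ≤ 2 := by
      rw [abs_of_pos (by linarith), abs_sub_comm, abs_of_nonneg (by linarith)]
      have : t⁻¹ ≤ 1 := inv_le_one_of_one_le₀ ht
      have : t * t⁻¹ = 1 := mul_inv_cancel₀ htpos.ne'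
      nlinarith
    calc φ t * exp (-2) ≤ φ x * exp (|x| * |t - x|) * exp (-2) := by
          gcongr; exact gaussianPDFReal_le_mul_exp t x
      _ ≤ φ x * exp 2 * exp (-2) := by
          gcongr; exact gaussianPDFReal_nonneg 0 1 x
      _ = φ x := by rw [mul_assoc, ← exp_add]; simp
  have h := mul_sub_le_Phi_sub_Phi (by simp [htpos.le] : t ≤ t + t⁻¹) hbound
  rw [add_sub_cancel_left] at h
  have hle : φ t * exp (-2) * t⁻¹ ≤ 1 - Phi t := by linarith [Phi_le_one (t + t⁻¹)]
  calc φ t = exp 2 * t * (φ t * exp (-2) * t⁻¹) := by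
        field_simp; rw [mul_assoc, ← exp_add]; simp
    _ ≤ exp 2 * t * (1 - Phi t) := by gcongr

lemma gaussianPDFReal_le_exp_three_mul_max {t : ℝ} (ht : 0 ≤ t) :
    φ t ≤ exp 3 * max 1 t * (1 - Phi t) := by
  have htail : 0 ≤ 1 - Phi t := by linarith [Phi_le_one t]
  rcases le_total t 1 with ht1 | ht1
  · have hmono : 1 - Phi 1 ≤ 1 - Phi t := by linarith [Phi_strictMono.monotone ht1]
    have hdist : |(1 : ℝ)| * |t - 1| ≤ 1 := by
      rw [abs_one, one_mul, abs_sub_comm, abs_of_nonneg (by linarith)]; linarith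
    have hone := gaussianPDFReal_le_exp_two_mul_one_sub_Phi le_rfl
    have htail1 : 0 ≤ 1 - Phi 1 := by linarith [Phi_le_one 1]
    calc φ t ≤ φ 1 * exp (|(1 : ℝ)| * |t - 1|) := gaussianPDFReal_le_mul_exp t 1
      _ ≤ exp 2 * 1 * (1 - Phi 1) * exp 1 := by gcongr
      _ = exp 3 * (1 - Phi 1) := by
          rw [show exp 3 = exp 2 * exp 1 by rw [← exp_add]; norm_num]; ring
      _ ≤ exp 3 * max 1 t * (1 - Phi t) := by rw [max_eq_left ht1, mul_one]; gcongr
  · calc φ t ≤ exp 2 * t * (1 - Phi t) := gaussianPDFReal_le_exp_two_mul_one_sub_Phi ht1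
      _ ≤ exp 3 * max 1 t * (1 - Phi t) := by gcongr <;> norm_num

lemma gaussianPDFReal_le_sigma2_mul_sqrt_log (t : ℝ) :
    φ t ≤ 4 * exp 3 * sigma2 t * √(log (1 / sigma2 t)) := by
  wlog ht : 0 ≤ t generalizing t
  · simpa [gaussianPDFReal_zero_one_neg, sigma2_neg] using this (-t) (by linarith)
  have hL := one_le_sqrt_log_inv_sigma2 t
  have hmax : max 1 t ≤ 2 * √(log (1 / sigma2 t)) := by
    refine max_le (by linarith) ?_
    simpa [abs_of_nonneg ht] using abs_le_two_mul_sqrt_log_inv_sigma2 t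
  calc φ t ≤ exp 3 * max 1 t * (1 - Phi t) := gaussianPDFReal_le_exp_three_mul_max ht
    _ ≤ exp 3 * (2 * √(log (1 / sigma2 t))) * (2 * sigma2 t) := by
        gcongr
        · linarith [Phi_le_one t]
        · exact one_sub_Phi_le_two_mul_sigma2 ht
    _ = 4 * exp 3 * sigma2 t * √(log (1 / sigma2 t)) := by ring

lemma gaussianPDFReal_le_of_abs_sub_le {t x ξ : ℝ} (hx : |x - t| ≤ ξ)
    (hξ : ξ ≤ 1 / 2 / √(log (1 / sigma2 t))) :
    φ x ≤ 4 * exp 4 * sigma2 t * √(log (1 / sigma2 t)) := by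
  have hL := one_le_sqrt_log_inv_sigma2 t
  have hσ := sigma2_pos t
  have hexp : |t| * |x - t| ≤ 1 := by
    have := abs_le_two_mul_sqrt_log_inv_sigma2 t
    rw [le_div_iff₀ (by positivity)] at hξ
    nlinarith [abs_nonneg t, abs_nonneg (x - t)]
  have hφt := gaussianPDFReal_le_sigma2_mul_sqrt_log t
  calc φ x ≤ φ t * exp (|t| * |x - t|) := gaussianPDFReal_le_mul_exp x t
    _ ≤ 4 * exp 3 * sigma2 t * √(log (1 / sigma2 t)) * exp 1 := by gcongr
    _ = 4 * exp 4 * sigma2 t * √(log (1 / sigma2 t)) := by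
        rw [show exp 4 = exp 3 * exp 1 by rw [← exp_add]; norm_num]; ring

/-- Lemma 2.4: regularity of the gaussian distribution function. -/
theorem stmt5 : ∃ c C : ℝ, 0 < c ∧ 0 < C ∧ ∀ t ξ : ℝ, 0 ≤ ξ →
    ξ ≤ c / Real.sqrt (Real.log (1 / sigma2 t)) →
    |Phi (t + ξ) - Phi t| ≤ C * ξ * sigma2 t * Real.sqrt (Real.log (1 / sigma2 t)) ∧
    |Phi (t - ξ) - Phi t| ≤ C * ξ * sigma2 t * Real.sqrt (Real.log (1 / sigma2 t)) := by
  refine ⟨1 / 2, 4 * exp 4, by norm_num, by positivity, fun t ξ hξ hξL ↦ ?_⟩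
  have hσ := sigma2_pos t
  have hincrement : ∀ s, |s - t| ≤ ξ →
      |Phi s - Phi t| ≤ 4 * exp 4 * ξ * sigma2 t * √(log (1 / sigma2 t)) := by
    intro s hs
    calc |Phi s - Phi t| ≤ 4 * exp 4 * sigma2 t * √(log (1 / sigma2 t)) * |s - t| :=
          abs_Phi_sub_Phi_le fun x hx ↦ gaussianPDFReal_le_of_abs_sub_le
            ((abs_sub_left_of_mem_uIcc (uIoc_subset_uIcc hx)).trans hs) hξL
      _ ≤ 4 * exp 4 * sigma2 t * √(log (1 / sigma2 t)) * ξ :=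
          mul_le_mul_of_nonneg_left hs (by positivity)
      _ = 4 * exp 4 * ξ * sigma2 t * √(log (1 / sigma2 t)) := by ring
  exact ⟨hincrement _ (by simp [abs_of_nonneg hξ]), hincrement _ (by simp [abs_of_nonneg hξ])⟩
end
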